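/- If two RLFTSs N and N′ are fluid bisimulation equivalent, then they are fluid trace equivalent: N ↔fl N′ implies N ≡fl N′. -/

import Mathlib

open scoped BigOperators

/-- A rated labeled fluid transition system (RLFTS) over a type `Act` of actions. -/
structure RLFTS (Act : Type) where
  S : Type
  E : Type
  s0 : S
  src : E → S
  tgt : E → S
  rate : E → ℝ
  label : E → Act
  RP : S → ℝ
  rate_pos : ∀ e, 0 < rate e
  out_finite : ∀ s : S, {e : E | src e = s}.Finite
  out_nonempty : ∀ s : S, ∃ e : E, src e = s

namespace RLFTS

variable {Act : Type}

/-- Exit rate of a state. -/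
noncomputable def RE (N : RLFTS Act) (s : N.S) : ℝ :=
  ∑ᶠ e ∈ {e : N.E | N.src e = s}, N.rate e

/-- Average sojourn time in a state. -/
noncomputable def SJ (N : RLFTS Act) (s : N.S) : ℝ := 1 / N.RE s

/-- Firing probability of an edge. -/
noncomputable def PTe (N : RLFTS Act) (e : N.E) : ℝ := N.rate e / N.RE (N.src e)

/-- `IsPathFrom N M es` : the list of edges `es` is a path starting in the state `M`. -/
def IsPathFrom (N : RLFTS Act) : N.S → List N.E → Prop
  | _, [] => True
  | M, e :: es => N.src e = M ∧ IsPathFrom N (N.tgt e) es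

/-- The list of states visited by a path starting in `M`. -/
def visits (N : RLFTS Act) : N.S → List N.E → List N.S
  | M, [] => [M]
  | M, e :: es => M :: visits N (N.tgt e) es

/-- Execution probability of a path. -/
noncomputable def pathPT (N : RLFTS Act) (es : List N.E) : ℝ := (es.map N.PTe).prod

/-- Cumulative execution probability of the `(σ,ς,ϱ)`-selected paths starting in `M`. -/
noncomputable def PTsel (N : RLFTS Act) (M : N.S) (σ : List Act) (ς ϱ : List ℝ) : ℝ :=
  ∑ᶠ es ∈ {es : List N.E | IsPathFrom N M es ∧ es.map N.label = σ ∧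
      (visits N M es).map N.SJ = ς ∧ (visits N M es).map N.RP = ϱ}, N.pathPT es

end RLFTS

namespace RLFTS

variable {Act : Type}

/-- Source map on the disjoint union of the edges of two RLFTSs. -/
def csrc (N N' : RLFTS Act) : N.E ⊕ N'.E → N.S ⊕ N'.S := Sum.map N.src N'.src

/-- Target map on the disjoint union of the edges of two RLFTSs. -/
def ctgt (N N' : RLFTS Act) : N.E ⊕ N'.E → N.S ⊕ N'.S := Sum.map N.tgt N'.tgt

/-- Rate function on the disjoint union of the edges of two RLFTSs. -/
def crate (N N' : RLFTS Act) : N.E ⊕ N'.E → ℝ := Sum.elim N.rate N'.rate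

/-- Labeling on the disjoint union of the edges of two RLFTSs. -/
def clabel (N N' : RLFTS Act) : N.E ⊕ N'.E → Act := Sum.elim N.label N'.label

/-- Fluid-rate function on the disjoint union of the states of two RLFTSs. -/
def cRP (N N' : RLFTS Act) : N.S ⊕ N'.S → ℝ := Sum.elim N.RP N'.RP

/-- Overall rate to move from the state `s` into the set of states `H` by action `a`,
in the disjoint union of two RLFTSs. -/
noncomputable def RMa (N N' : RLFTS Act) (a : Act) (s : N.S ⊕ N'.S)
    (H : Set (N.S ⊕ N'.S)) : ℝ :=
  ∑ᶠ e ∈ {e : N.E ⊕ N'.E | csrc N N' e = s ∧ clabel N N' e = a ∧ ctgt N N' e ∈ H},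
    crate N N' e

/-- `R` is a fluid bisimulation between the RLFTSs `N` and `N'`. -/
def FluidBisim (N N' : RLFTS Act) (R : (N.S ⊕ N'.S) → (N.S ⊕ N'.S) → Prop) : Prop :=
  Equivalence R ∧ R (Sum.inl N.s0) (Sum.inr N'.s0) ∧
    ∀ s1 s2, R s1 s2 → cRP N N' s1 = cRP N N' s2 ∧
      ∀ (a : Act) (s : N.S ⊕ N'.S), RMa N N' a s1 {v | R s v} = RMa N N' a s2 {v | R s v}

/-- The RLFTSs `N` and `N'` are fluid bisimulation equivalent. -/
def FluidBisimEquiv (N N' : RLFTS Act) : Prop := ∃ R, FluidBisim N N' R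

end RLFTS

namespace RLFTS

/-- The RLFTSs `N` and `N'` are fluid trace equivalent: the cumulative probabilities of the
`(σ,ς,ϱ)`-selected paths from the initial states coincide for every triple `(σ,ς,ϱ)` of lists
over `Act`, `ℝ_{>0}` and `ℝ`. -/
def FluidTraceEquiv {Act : Type} (N N' : RLFTS Act) : Prop :=
  ∀ (σ : List Act) (ς ϱ : List ℝ), (∀ x ∈ ς, 0 < x) →
    N.PTsel N.s0 σ ς ϱ = N'.PTsel N'.s0 σ ς ϱ

end RLFTS

/-!
Glue `N` and `N'` into one RLFTS on `S ⊕ S'`. Both embed into it as subsystems closed under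
outgoing edges, so the selected-path probabilities from `s₀` and `s₀'` can be computed there,
and a fluid bisimulation between `N` and `N'` is a fluid bisimulation of this single system.

Inside one system, `PT(u, σ, ς, ϱ)` is constant on bisimulation classes, by induction on `σ`.
The heads of `ς` and `ϱ` only see `SJ u` and `RP u`, and `SJ` is preserved because `RE u` is the
sum of `RM_a(u, H)` over all actions `a` and classes `H`. The first step contributes
`∑ PT(e) · PT(tgt e, …)`, which after grouping the edges by the class `H` of `tgt e` only
involves `RM_a(u, H) / RE(u)` and the (class-invariant) tails.
-/

theorem Finset.sum_eq_finsum_fiberwise {α β M : Type*} [AddCommMonoid M] [DecidableEq β]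
    (s : Finset α) (g : α → β) (f : α → M) :
    ∑ a ∈ s, f a = ∑ᶠ b, ∑ a ∈ s with g a = b, f a := by
  rw [finsum_eq_sum_of_support_subset _ (s.support_of_fiberwise_sum_subset_image f g),
    Finset.sum_fiberwise_of_maps_to fun _ => Finset.mem_image_of_mem g]

namespace RLFTS

open scoped Classical

variable {Act : Type}

section Rates

variable (M : RLFTS Act)

noncomputable def out (s : M.S) : Finset M.E := (M.out_finite s).toFinset

@[simp]
lemma mem_out {s : M.S} {e : M.E} : e ∈ M.out s ↔ M.src e = s :=
  Set.Finite.mem_toFinset _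

lemma RE_eq_sum (s : M.S) : M.RE s = ∑ e ∈ M.out s, M.rate e :=
  finsum_mem_eq_finite_toFinset_sum _ (M.out_finite s)

noncomputable def RM (a : Act) (s : M.S) (H : Set M.S) : ℝ :=
  ∑ᶠ e ∈ {e : M.E | M.src e = s ∧ M.label e = a ∧ M.tgt e ∈ H}, M.rate e

lemma RM_eq_sum (a : Act) (s : M.S) (H : Set M.S) :
    M.RM a s H = ∑ e ∈ M.out s with M.label e = a ∧ M.tgt e ∈ H, M.rate e := by
  rw [RM, ← finsum_mem_coe_finset, Finset.coe_filter]
  simp only [mem_out]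

def IsFluidBisim (R : M.S → M.S → Prop) : Prop :=
  Equivalence R ∧ ∀ s1 s2, R s1 s2 → M.RP s1 = M.RP s2 ∧
    ∀ (a : Act) (s : M.S), M.RM a s1 {v | R s v} = M.RM a s2 {v | R s v}

end Rates

namespace IsFluidBisim

variable {M : RLFTS Act} {R : M.S → M.S → Prop}

lemma RP_eq (hR : M.IsFluidBisim R) {u v : M.S} (huv : R u v) : M.RP u = M.RP v :=
  (hR.2 u v huv).1

lemma sum_rate_mul_eq (hR : M.IsFluidBisim R) (a : Act) {f : M.S → ℝ}
    (hf : ∀ x y, R x y → f x = f y) {u v : M.S} (huv : R u v) :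
    ∑ e ∈ M.out u with M.label e = a, M.rate e * f (M.tgt e) =
      ∑ e ∈ M.out v with M.label e = a, M.rate e * f (M.tgt e) := by
  let r : Setoid M.S := ⟨R, hR.1⟩
  have hgroup : ∀ s, ∑ e ∈ M.out s with M.label e = a, M.rate e * f (M.tgt e) =
      ∑ᶠ q : Quotient r, M.RM a s {v | R q.out v} * Quotient.lift f hf q := by
    intro s
    rw [Finset.sum_eq_finsum_fiberwise _ (fun e => Quotient.mk r (M.tgt e))]
    refine finsum_congr fun q => ?_
    rw [RM_eq_sum, Finset.sum_mul, Finset.filter_filter]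
    refine Finset.sum_congr (Finset.filter_congr fun e _ => ?_) fun e he => ?_
    · rw [← Quotient.out_eq q, Quotient.eq, Quotient.out_eq q]
      exact and_congr_right fun _ => ⟨hR.1.symm, hR.1.symm⟩
    · obtain ⟨-, -, hq⟩ := Finset.mem_filter.mp he
      rw [← Quotient.out_eq q, Quotient.lift_mk, hf _ _ hq]
  rw [hgroup, hgroup]
  exact finsum_congr fun q => by rw [(hR.2 u v huv).2]

lemma RE_eq (hR : M.IsFluidBisim R) {u v : M.S} (huv : R u v) : M.RE u = M.RE v := by
  have hsplit : ∀ s, M.RE s = ∑ᶠ a, ∑ e ∈ M.out s with M.label e = a, M.rate e * 1 := by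
    intro s
    simp only [mul_one]
    rw [RE_eq_sum, Finset.sum_eq_finsum_fiberwise _ M.label]
  rw [hsplit, hsplit]
  exact finsum_congr fun a => hR.sum_rate_mul_eq a (f := fun _ => 1) (fun _ _ _ => rfl) huv

lemma SJ_eq (hR : M.IsFluidBisim R) {u v : M.S} (huv : R u v) : M.SJ u = M.SJ v := by
  rw [SJ, SJ, hR.RE_eq huv]

lemma sum_PTe_mul_eq (hR : M.IsFluidBisim R) (a : Act) {f : M.S → ℝ}
    (hf : ∀ x y, R x y → f x = f y) {u v : M.S} (huv : R u v) :
    ∑ e ∈ M.out u with M.label e = a, M.PTe e * f (M.tgt e) =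
      ∑ e ∈ M.out v with M.label e = a, M.PTe e * f (M.tgt e) := by
  have hPTe : ∀ s, ∑ e ∈ M.out s with M.label e = a, M.PTe e * f (M.tgt e) =
      (M.RE s)⁻¹ * ∑ e ∈ M.out s with M.label e = a, M.rate e * f (M.tgt e) := by
    intro s
    rw [Finset.mul_sum]
    refine Finset.sum_congr rfl fun e he => ?_
    rw [PTe, M.mem_out.mp (Finset.mem_filter.mp he).1]
    ring
  rw [hPTe, hPTe, hR.RE_eq huv, hR.sum_rate_mul_eq a hf huv]

end IsFluidBisim

section Paths

variable (M : RLFTS Act)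

lemma finite_setOf_isPathFrom_length (n : ℕ) (w : M.S) :
    {es : List M.E | M.IsPathFrom w es ∧ es.length = n}.Finite := by
  induction n generalizing w with
  | zero => exact (Set.finite_singleton []).subset fun es h => List.length_eq_zero_iff.mp h.2
  | succ n ih =>
    refine ((M.out_finite w).biUnion fun e _ => (ih (M.tgt e)).image (e :: ·)).subset ?_
    rintro (_ | ⟨e, es⟩) ⟨hpath, hlen⟩
    · simp at hlen
    · exact Set.mem_biUnion hpath.1 ⟨es, ⟨hpath.2, by simpa using hlen⟩, rfl⟩

def pathSet (w : M.S) (σ : List Act) (ς ϱ : List ℝ) : Set (List M.E) :=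
  {es | M.IsPathFrom w es ∧ es.map M.label = σ ∧
    (M.visits w es).map M.SJ = ς ∧ (M.visits w es).map M.RP = ϱ}

lemma PTsel_eq_finsum_pathSet (w : M.S) (σ : List Act) (ς ϱ : List ℝ) :
    M.PTsel w σ ς ϱ = ∑ᶠ es ∈ M.pathSet w σ ς ϱ, M.pathPT es := rfl

lemma pathSet_finite (w : M.S) (σ : List Act) (ς ϱ : List ℝ) :
    (M.pathSet w σ ς ϱ).Finite :=
  (M.finite_setOf_isPathFrom_length σ.length w).subset fun es ⟨hpath, hlabel, _⟩ =>
    ⟨hpath, by rw [← hlabel, List.length_map]⟩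

lemma visits_eq_cons (u : M.S) (es : List M.E) : ∃ t, M.visits u es = u :: t := by
  cases es <;> exact ⟨_, rfl⟩

lemma PTsel_eq_zero_of_not_head {u : M.S} {σ : List Act} {ς ϱ : List ℝ}
    (h : ¬ ∃ ς' ϱ', ς = M.SJ u :: ς' ∧ ϱ = M.RP u :: ϱ') : M.PTsel u σ ς ϱ = 0 := by
  rw [PTsel_eq_finsum_pathSet, Set.eq_empty_of_forall_notMem (s := M.pathSet u σ ς ϱ),
    finsum_mem_empty]
  rintro es ⟨-, -, rfl, rfl⟩
  obtain ⟨t, ht⟩ := M.visits_eq_cons u es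
  exact h ⟨_, _, by rw [ht, List.map_cons], by rw [ht, List.map_cons]⟩

lemma PTsel_nil (u : M.S) (ς ϱ : List ℝ) :
    M.PTsel u [] (M.SJ u :: ς) (M.RP u :: ϱ) = if ς = [] ∧ ϱ = [] then 1 else 0 := by
  have hset :
      M.pathSet u [] (M.SJ u :: ς) (M.RP u :: ϱ) = {es | es = [] ∧ ς = [] ∧ ϱ = []} := by
    ext es
    simp only [pathSet, Set.mem_ofPred_eq, List.map_eq_nil_iff]
    constructor
    · rintro ⟨-, rfl, hς, hϱ⟩
      simp_all [visits]
    · rintro ⟨rfl, rfl, rfl⟩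
      simp [IsPathFrom, visits]
  rw [PTsel_eq_finsum_pathSet, hset]
  split_ifs with h
  · simp [h, pathPT]
  · simp [h]

lemma pathSet_cons (u : M.S) (a : Act) (σ : List Act) (ς ϱ : List ℝ) :
    M.pathSet u (a :: σ) (M.SJ u :: ς) (M.RP u :: ϱ) =
      ⋃ e ∈ {e : M.E | M.src e = u ∧ M.label e = a},
        (e :: ·) '' M.pathSet (M.tgt e) σ ς ϱ := by
  ext (_ | ⟨e, es⟩)
  · simp [pathSet]
  · simp only [pathSet, Set.mem_ofPred_eq, IsPathFrom, List.map_cons, List.cons.injEq, visits,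
      true_and, Set.mem_iUnion, Set.mem_image, exists_eq_right_right, exists_and_left, exists_prop]
    tauto

lemma PTsel_cons (u : M.S) (a : Act) (σ : List Act) (ς ϱ : List ℝ) :
    M.PTsel u (a :: σ) (M.SJ u :: ς) (M.RP u :: ϱ) =
      ∑ e ∈ M.out u with M.label e = a, M.PTe e * M.PTsel (M.tgt e) σ ς ϱ := by
  have hout : {e : M.E | M.src e = u ∧ M.label e = a} = ↑{e ∈ M.out u | M.label e = a} := by
    ext e
    simp
  rw [PTsel_eq_finsum_pathSet, pathSet_cons, finsum_mem_biUnion]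
  · rw [hout, finsum_mem_coe_finset]
    refine Finset.sum_congr rfl fun e _ => ?_
    rw [finsum_mem_image List.cons_injective.injOn, PTsel_eq_finsum_pathSet, mul_finsum_mem]
    simp only [pathPT, List.map_cons, List.prod_cons]
  · exact fun e₁ _ e₂ _ hne => Set.disjoint_left.mpr fun _ ⟨_, _, h₁⟩ ⟨_, _, h₂⟩ =>
      hne (List.head_eq_of_cons_eq (h₁.trans h₂.symm))
  · exact (M.out_finite u).subset fun e he => he.1
  · exact fun e _ => (M.pathSet_finite _ σ ς ϱ).image _

end Paths

section Bisim

variable {M : RLFTS Act} {R : M.S → M.S → Prop}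

lemma PTsel_eq_of_head_eq {u v : M.S} {σ : List Act} (hSJ : M.SJ u = M.SJ v)
    (hRP : M.RP u = M.RP v)
    (h : ∀ ς ϱ, M.PTsel u σ (M.SJ u :: ς) (M.RP u :: ϱ) =
      M.PTsel v σ (M.SJ v :: ς) (M.RP v :: ϱ))
    (ς ϱ : List ℝ) : M.PTsel u σ ς ϱ = M.PTsel v σ ς ϱ := by
  by_cases hhead : ∃ ς' ϱ', ς = M.SJ u :: ς' ∧ ϱ = M.RP u :: ϱ'
  · obtain ⟨ς', ϱ', rfl, rfl⟩ := hhead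
    rw [h, hSJ, hRP]
  · rw [M.PTsel_eq_zero_of_not_head hhead, M.PTsel_eq_zero_of_not_head (by rwa [← hSJ, ← hRP])]

theorem IsFluidBisim.PTsel_eq (hR : M.IsFluidBisim R) (σ : List Act) :
    ∀ {u v : M.S}, R u v → ∀ ς ϱ, M.PTsel u σ ς ϱ = M.PTsel v σ ς ϱ := by
  induction σ with
  | nil =>
    intro u v huv
    refine PTsel_eq_of_head_eq (hR.SJ_eq huv) (hR.RP_eq huv) fun ς ϱ => ?_
    rw [PTsel_nil, PTsel_nil]
  | cons a σ ih =>
    intro u v huv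
    refine PTsel_eq_of_head_eq (hR.SJ_eq huv) (hR.RP_eq huv) fun ς ϱ => ?_
    rw [PTsel_cons, PTsel_cons]
    exact hR.sum_PTe_mul_eq a (fun x y hxy => ih hxy ς ϱ) huv

end Bisim

/-- `N` sits inside `M` as a subsystem closed under outgoing edges (`exists_edge_of_src`), so the
paths of `M` from `state s` are exactly the images of the paths of `N` from `s`. -/
structure Embedding (N M : RLFTS Act) where
  state : N.S → M.S
  edge : N.E → M.E
  edge_injective : Function.Injective edge
  src_edge : ∀ e, M.src (edge e) = state (N.src e)
  tgt_edge : ∀ e, M.tgt (edge e) = state (N.tgt e)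
  rate_edge : ∀ e, M.rate (edge e) = N.rate e
  label_edge : ∀ e, M.label (edge e) = N.label e
  RP_state : ∀ s, M.RP (state s) = N.RP s
  exists_edge_of_src : ∀ s e', M.src e' = state s → ∃ e, N.src e = s ∧ edge e = e'

namespace Embedding

variable {N M : RLFTS Act} (f : Embedding N M)

lemma setOf_src_state (s : N.S) :
    {e' | M.src e' = f.state s} = f.edge '' {e | N.src e = s} := by
  ext e'
  constructor
  · intro he'
    obtain ⟨e, he, rfl⟩ := f.exists_edge_of_src s e' he'
    exact ⟨e, he, rfl⟩
  · rintro ⟨e, rfl, rfl⟩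
    exact f.src_edge e

lemma src_edge_eq_state_iff {e : N.E} {s : N.S} : M.src (f.edge e) = f.state s ↔ N.src e = s := by
  refine ⟨fun h => ?_, fun h => h ▸ f.src_edge e⟩
  obtain ⟨e₀, he₀, hedge⟩ := f.exists_edge_of_src s _ h
  rwa [← f.edge_injective hedge]

lemma RE_state (s : N.S) : M.RE (f.state s) = N.RE s := by
  rw [RE, RE, setOf_src_state, finsum_mem_image f.edge_injective.injOn]
  simp only [f.rate_edge]

lemma SJ_state (s : N.S) : M.SJ (f.state s) = N.SJ s := by
  rw [SJ, SJ, RE_state]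

lemma PTe_edge (e : N.E) : M.PTe (f.edge e) = N.PTe e := by
  rw [PTe, PTe, rate_edge, src_edge, RE_state]

lemma pathPT_map (es : List N.E) : M.pathPT (es.map f.edge) = N.pathPT es := by
  simp only [pathPT, List.map_map, Function.comp_def, PTe_edge]

lemma isPathFrom_map_iff (s : N.S) (es : List N.E) :
    M.IsPathFrom (f.state s) (es.map f.edge) ↔ N.IsPathFrom s es := by
  induction es generalizing s with
  | nil => exact Iff.rfl
  | cons e es ih =>
    simp only [List.map_cons, IsPathFrom, f.tgt_edge, ih, f.src_edge_eq_state_iff]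

lemma exists_eq_map_of_isPathFrom (s : N.S) (es' : List M.E)
    (h : M.IsPathFrom (f.state s) es') : ∃ es : List N.E, es' = es.map f.edge := by
  induction es' generalizing s with
  | nil => exact ⟨[], rfl⟩
  | cons e' es' ih =>
    obtain ⟨e, he, rfl⟩ := f.exists_edge_of_src s e' h.1
    obtain ⟨es, rfl⟩ := ih (N.tgt e) (f.tgt_edge e ▸ h.2)
    exact ⟨e :: es, rfl⟩

lemma visits_map (s : N.S) (es : List N.E) :
    M.visits (f.state s) (es.map f.edge) = (N.visits s es).map f.state := by
  induction es generalizing s with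
  | nil => rfl
  | cons e es ih => simp only [List.map_cons, visits, f.tgt_edge, ih]

lemma pathSet_state (s : N.S) (σ : List Act) (ς ϱ : List ℝ) :
    M.pathSet (f.state s) σ ς ϱ = List.map f.edge '' N.pathSet s σ ς ϱ := by
  have hSJ : M.SJ ∘ f.state = N.SJ := funext f.SJ_state
  have hRP : M.RP ∘ f.state = N.RP := funext f.RP_state
  have hlabel : M.label ∘ f.edge = N.label := funext f.label_edge
  ext es'
  constructor
  · intro h
    obtain ⟨es, rfl⟩ := f.exists_eq_map_of_isPathFrom s es' h.1
    refine ⟨es, ?_, rfl⟩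
    simpa only [pathSet, Set.mem_ofPred_eq, isPathFrom_map_iff, visits_map, List.map_map, hSJ, hRP,
      hlabel] using h
  · rintro ⟨es, h, rfl⟩
    simpa only [pathSet, Set.mem_ofPred_eq, isPathFrom_map_iff, visits_map, List.map_map, hSJ, hRP,
      hlabel] using h

lemma PTsel_state (s : N.S) (σ : List Act) (ς ϱ : List ℝ) :
    M.PTsel (f.state s) σ ς ϱ = N.PTsel s σ ς ϱ := by
  rw [PTsel_eq_finsum_pathSet, PTsel_eq_finsum_pathSet, pathSet_state,
    finsum_mem_image (List.map_injective_iff.mpr f.edge_injective).injOn]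
  simp only [pathPT_map]

end Embedding

section DisjSum

variable (N N' : RLFTS Act)

/-- The disjoint union of `N` and `N'`; its initial state plays no role. -/
def disjSum : RLFTS Act where
  S := N.S ⊕ N'.S
  E := N.E ⊕ N'.E
  s0 := Sum.inl N.s0
  src := csrc N N'
  tgt := ctgt N N'
  rate := crate N N'
  label := clabel N N'
  RP := cRP N N'
  rate_pos := Sum.rec N.rate_pos N'.rate_pos
  out_finite := by
    rintro (s | s)
    · exact ((N.out_finite s).image Sum.inl).subset fun
        | .inl e, he => ⟨e, Sum.inl_injective he, rfl⟩
    · exact ((N'.out_finite s).image Sum.inr).subset fun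
        | .inr e, he => ⟨e, Sum.inr_injective he, rfl⟩
  out_nonempty := by
    rintro (s | s)
    · obtain ⟨e, he⟩ := N.out_nonempty s
      exact ⟨.inl e, congrArg Sum.inl he⟩
    · obtain ⟨e, he⟩ := N'.out_nonempty s
      exact ⟨.inr e, congrArg Sum.inr he⟩

def inlEmbedding : Embedding N (disjSum N N') where
  state := Sum.inl
  edge := Sum.inl
  edge_injective := Sum.inl_injective
  src_edge _ := rfl
  tgt_edge _ := rfl
  rate_edge _ := rfl
  label_edge _ := rfl
  RP_state _ := rfl
  exists_edge_of_src
    | _, .inl e, he => ⟨e, Sum.inl_injective he, rfl⟩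

def inrEmbedding : Embedding N' (disjSum N N') where
  state := Sum.inr
  edge := Sum.inr
  edge_injective := Sum.inr_injective
  src_edge _ := rfl
  tgt_edge _ := rfl
  rate_edge _ := rfl
  label_edge _ := rfl
  RP_state _ := rfl
  exists_edge_of_src
    | _, .inr e, he => ⟨e, Sum.inr_injective he, rfl⟩

end DisjSum

end RLFTS

/-- Fluid bisimulation equivalence implies fluid trace equivalence. -/
theorem RLFTS.fluidBisimEquiv_implies_fluidTraceEquiv {Act : Type} (N N' : RLFTS Act)
    (h : RLFTS.FluidBisimEquiv N N') : RLFTS.FluidTraceEquiv N N' := by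
  obtain ⟨R, hequiv, hinit, hstep⟩ := h
  -- `RM` of the disjoint sum unfolds to `RMa N N'`.
  have hR : (RLFTS.disjSum N N').IsFluidBisim R := ⟨hequiv, hstep⟩
  intro σ ς ϱ _
  rw [← (RLFTS.inlEmbedding N N').PTsel_state, ← (RLFTS.inrEmbedding N N').PTsel_state]
  exact hR.PTsel_eq σ hinit ς ϱ
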